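/- arXiv:1607.06907 — 3 statements merged into one kernel-verified Lean document; each statement's English description precedes it below -/
import Mathlib

section
/- Let Γ be a finite group of odd order acting linearly on a real vector space W with W^Γ = 0, and let W_1,…,W_p be linearly independent subspaces permuted by Γ. Then dim W_1 ≠ 1. -/
theorem stmt_6 {Γ : Type*} [Group Γ] [Finite Γ] (hodd : Odd (Nat.card Γ))
    {W : Type*} [AddCommGroup W] [Module ℝ W] [FiniteDimensional ℝ W]
    (ρ : Representation ℝ Γ W)
    (hinv : ∀ w : W, (∀ γ : Γ, ρ γ w = w) → w = 0)
    {p : ℕ} (Wsub : Fin (p + 1) → Submodule ℝ W)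
    (hne : ∀ i, Wsub i ≠ ⊥)
    (hind : iSupIndep Wsub)
    (hperm : ∀ (γ : Γ) (i : Fin (p + 1)), ∃ j, (Wsub i).map (ρ γ) = Wsub j) :
    Module.finrank ℝ (Wsub 0) ≠ 1 := by
  intro hdim
  have := Fintype.ofFinite Γ
  classical
  obtain ⟨w, hw0, hwne⟩ : ∃ w ∈ Wsub 0, w ≠ 0 := by
    simpa [Submodule.ne_bot_iff] using hne 0
  -- Wsub 0 is spanned by w
  have hspan : Submodule.span ℝ {w} = Wsub 0 := by
    apply Submodule.eq_of_le_of_finrank_eq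
    · simpa [Submodule.span_le] using hw0
    · rw [hdim, finrank_span_singleton hwne]
  -- choose j
  choose j hj using fun γ => hperm γ 0
  -- if the image of Wsub 0 under ρ γ is Wsub 0 then ρ γ w = w
  have hfix : ∀ γ : Γ, Wsub (j γ) = Wsub 0 → ρ γ w = w := by
    intro γ hγ0
    have hmem : ρ γ w ∈ Wsub 0 := by
      rw [← hγ0, ← hj γ]; exact Submodule.mem_map_of_mem hw0
    rw [← hspan, Submodule.mem_span_singleton] at hmem
    obtain ⟨c, hc⟩ := hmem
    have hpow : ∀ k : ℕ, (ρ γ ^ k) w = c ^ k • w := by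
      intro k
      induction k with
      | zero => simp
      | succ k ih =>
        rw [pow_succ, Module.End.mul_apply, ← hc, map_smul, ih, smul_smul,
          pow_succ, mul_comm]
    have hcn : c ^ orderOf γ = 1 := by
      have h1 : (ρ γ ^ orderOf γ) w = w := by
        rw [← map_pow, pow_orderOf_eq_one, map_one, Module.End.one_apply]
      have h2 := hpow (orderOf γ)
      rw [h1] at h2
      have hz : (c ^ orderOf γ - 1) • w = 0 := by
        rw [sub_smul, one_smul, ← h2, sub_self]
      exact sub_eq_zero.mp ((smul_eq_zero.mp hz).resolve_right hwne)
    have hoddn : Odd (orderOf γ) := by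
      rcases Nat.even_or_odd (orderOf γ) with he | ho
      · exfalso
        have hdvd : orderOf γ ∣ Nat.card Γ := orderOf_dvd_natCard γ
        have h2 : (2 : ℕ) ∣ Nat.card Γ := dvd_trans he.two_dvd hdvd
        rw [Nat.odd_iff] at hodd
        omega
      · exact ho
    have hc1 : c = 1 := by
      have hinj := (hoddn.strictMono_pow (R := ℝ)).injective
      have h1 : c ^ orderOf γ = 1 ^ orderOf γ := by rw [hcn, one_pow]
      exact hinj h1
    rw [← hc, hc1, one_smul]
  -- the averaged vector
  set v : W := ∑ γ : Γ, ρ γ w with hv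
  have hvinv : ∀ δ : Γ, ρ δ v = v := by
    intro δ
    rw [hv, map_sum]
    refine Fintype.sum_equiv (Equiv.mulLeft δ) _ _ fun γ => ?_
    rw [Equiv.coe_mulLeft, map_mul, Module.End.mul_apply]
  have hv0 : v = 0 := hinv v hvinv
  -- split the sum according to whether Wsub (j γ) = Wsub 0
  set S : Finset Γ := Finset.univ.filter (fun γ => Wsub (j γ) = Wsub 0) with hS
  set x : W := ∑ γ ∈ S, ρ γ w with hx
  set y : W := ∑ γ ∈ Finset.univ.filter (fun γ => ¬ Wsub (j γ) = Wsub 0), ρ γ w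
    with hy
  have hsplit : x + y = 0 := by
    rw [hx, hy, hS,
      Finset.sum_filter_add_sum_filter_not Finset.univ
        (fun γ => Wsub (j γ) = Wsub 0), ← hv, hv0]
  have hxval : x = S.card • w := by
    rw [hx, Finset.sum_congr rfl (fun γ hγ => hfix γ (Finset.mem_filter.mp hγ).2),
      Finset.sum_const]
  have hone : (1 : Γ) ∈ S := by
    refine Finset.mem_filter.mpr ⟨Finset.mem_univ _, ?_⟩
    have h1 := hj (1 : Γ)
    rw [map_one] at h1
    rw [← h1]
    exact Submodule.map_id _
  -- x lies in Wsub 0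
  have hx0 : x ∈ Wsub 0 := by
    rw [hxval, ← Nat.cast_smul_eq_nsmul ℝ]
    exact Submodule.smul_mem _ _ hw0
  -- y lies in the supremum of the others
  have hysup : y ∈ ⨆ i, ⨆ _ : i ≠ (0 : Fin (p + 1)), Wsub i := by
    rw [hy]
    refine Submodule.sum_mem _ fun γ hγ => ?_
    have hγne : Wsub (j γ) ≠ Wsub 0 := (Finset.mem_filter.mp hγ).2
    have hjne : j γ ≠ 0 := fun h => hγne (by rw [h])
    have hmem : ρ γ w ∈ Wsub (j γ) := by
      rw [← hj γ]; exact Submodule.mem_map_of_mem hw0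
    exact Submodule.mem_iSup_of_mem (j γ) (Submodule.mem_iSup_of_mem hjne hmem)
  have hxsup : x ∈ ⨆ i, ⨆ _ : i ≠ (0 : Fin (p + 1)), Wsub i := by
    rw [eq_neg_of_add_eq_zero_left hsplit]
    exact Submodule.neg_mem _ hysup
  have hxzero : x = 0 := Submodule.disjoint_def.mp (hind 0) x hx0 hxsup
  rw [hxval] at hxzero
  have hcard : S.card ≠ 0 := Finset.card_ne_zero_of_mem hone
  rw [← Nat.cast_smul_eq_nsmul ℝ, smul_eq_zero] at hxzero
  rcases hxzero with h | h
  · exact hcard (Nat.cast_eq_zero.mp h)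
  · exact hwne h
end

section
/- If P is a q-stable finite multiset of vectors with m-dimensional span containing exactly m + q nonzero vectors, then any subset of at most m nonzero vectors of P is linearly independent. -/
/-- A finite multiset of vectors is `q`-stable if its span is unchanged after
removing any at most `q` of its vectors (with multiplicity). -/
def IsQStable (F : Type*) {V : Type*} [Field F] [AddCommGroup V] [Module F V] [DecidableEq V]
    (q : ℕ) (P : Multiset V) : Prop :=
  ∀ S ≤ P, Multiset.card S ≤ q →
    Submodule.span F {x : V | x ∈ P - S} = Submodule.span F {x : V | x ∈ P}

theorem stmt_9 {F : Type*} [Field F] {V : Type*} [AddCommGroup V] [Module F V]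
    [FiniteDimensional F V] [DecidableEq V]
    (q : ℕ) (hq : 0 < q) (P : Multiset V) (hP : IsQStable F q P)
    (m : ℕ) (hm : Module.finrank F (Submodule.span F {x : V | x ∈ P}) = m)
    (hm1 : 1 ≤ m)
    (hcard : Multiset.card (P.filter (fun x => x ≠ 0)) = m + q) :
    ∀ S ≤ P.filter (fun x => x ≠ 0), Multiset.card S ≤ m →
      S.Nodup ∧ LinearIndependent F (fun x : {x : V // x ∈ S} => (x : V)) := by
  intro S hS hScard
  set Q := P.filter (fun x => x ≠ 0) with hQdef
  have hQP : Q ≤ P := Multiset.filter_le _ _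
  set R := Q - S with hRdef
  set n := Multiset.card S with hndef
  have hRcard : Multiset.card R = m + q - n := by
    rw [hRdef, Multiset.card_sub hS, hcard]
  have hqR : q ≤ Multiset.card R := by omega
  -- pick a submultiset S' of R with exactly q elements
  obtain ⟨S', hS'R, hS'card⟩ : ∃ S' ≤ R, Multiset.card S' = q := by
    refine ⟨(R.toList.take q : List V), ?_, ?_⟩
    · have h1 : ((R.toList.take q : List V) : Multiset V) ≤ (R.toList : Multiset V) :=
        (List.take_sublist q R.toList).subperm
      rwa [Multiset.coe_toList] at h1
    · simp [List.length_take, Multiset.length_toList]; omega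
  have hS'Q : S' ≤ Q := hS'R.trans tsub_le_self
  have hS'P : S' ≤ P := hS'Q.trans hQP
  set T := R - S' with hTdef
  have hTcard : Multiset.card T = m - n := by
    rw [hTdef, Multiset.card_sub hS'R]; omega
  -- key multiset identity
  have hSR : S + R = Q := add_tsub_cancel_of_le hS
  have hQS' : Q - S' = S + T := by
    rw [hTdef, ← hSR, add_tsub_assoc_of_le hS'R]
  -- stability
  have hstab := hP S' hS'P (by rw [hS'card])
  -- the nonzero elements of P - S' are in S + T
  have hsub : {x : V | x ∈ P - S'} ⊆
      insert (0 : V) ((↑S.toFinset : Set V) ∪ (↑T.toFinset : Set V)) := by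
    intro x hx
    by_cases h0 : x = 0
    · simp [h0]
    · have hxQ : x ∈ Q - S' := by
        have hxf : x ∈ (P - S').filter (fun x => x ≠ 0) := Multiset.mem_filter.mpr ⟨hx, h0⟩
        rw [Multiset.filter_sub] at hxf
        have hfS' : S'.filter (fun x => x ≠ 0) = S' := by
          rw [Multiset.filter_eq_self]
          intro a ha
          have : a ∈ Q := Multiset.mem_of_le hS'Q ha
          exact (Multiset.mem_filter.mp this).2
        rwa [hfS'] at hxf
      rw [hQS', Multiset.mem_add] at hxQ
      rcases hxQ with h | h
      · exact Set.mem_insert_iff.mpr (Or.inr (Or.inl (by simpa using h)))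
      · exact Set.mem_insert_iff.mpr (Or.inr (Or.inr (by simpa using h)))
  -- span estimate
  have hspan1 : Submodule.span F {x : V | x ∈ P - S'} ≤
      Submodule.span F (↑S.toFinset : Set V) ⊔ Submodule.span F (↑T.toFinset : Set V) := by
    have := Submodule.span_mono (R := F) hsub
    rwa [Submodule.span_insert_zero, Submodule.span_union] at this
  have hrank1 : m ≤ Module.finrank F ↥(Submodule.span F (↑S.toFinset : Set V) ⊔
      Submodule.span F (↑T.toFinset : Set V)) := by
    rw [← hm, ← hstab]
    exact Submodule.finrank_mono hspan1
  have hrank2 := Submodule.finrank_add_le_finrank_add_finrank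
    (Submodule.span F (↑S.toFinset : Set V)) (Submodule.span F (↑T.toFinset : Set V))
  have hrank3 : Module.finrank F (Submodule.span F (↑T.toFinset : Set V)) ≤ m - n := by
    calc Module.finrank F (Submodule.span F (↑T.toFinset : Set V)) ≤ T.toFinset.card :=
          finrank_span_finset_le_card _
      _ ≤ Multiset.card T := Multiset.toFinset_card_le _
      _ = m - n := hTcard
  have hrankS_ge : n ≤ Module.finrank F (Submodule.span F (↑S.toFinset : Set V)) := by omega
  have hrankS_le : Module.finrank F (Submodule.span F (↑S.toFinset : Set V)) ≤ S.toFinset.card :=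
    finrank_span_finset_le_card _
  have hFcard : S.toFinset.card ≤ n := Multiset.toFinset_card_le _
  have hFcard_eq : S.toFinset.card = n := le_antisymm hFcard (by omega)
  have hrankS_eq : Module.finrank F (Submodule.span F (↑S.toFinset : Set V)) = n := by omega
  -- Nodup
  have hnodup : S.Nodup := by
    have hc : S.toFinset.card = Multiset.card S.dedup := Multiset.card_toFinset S
    have hded : S.dedup = S := Multiset.eq_of_le_of_card_le (Multiset.dedup_le S) (by omega)
    rw [← hded]; exact Multiset.nodup_dedup S
  refine ⟨hnodup, ?_⟩
  -- linear independence
  have hset : {x : V | x ∈ S} = (↑S.toFinset : Set V) := by ext x; simp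
  show LinearIndependent F ((↑) : ({x : V | x ∈ S} : Set V) → V)
  rw [hset]
  rw [linearIndependent_iff_card_eq_finrank_span, Subtype.range_coe]
  simp only [Set.finrank, hrankS_eq]
  rw [Fintype.card_of_subtype S.toFinset (fun x => by simp), hFcard_eq]
end

section
/- If a q-stable finite multiset P decomposes as a union P = P₁ ∪ P₂ where span(P₁) and span(P₂) are linearly independent (intersect trivially, spanning span(P) as a direct sum), then each component P₁, P₂ is q-stable. -/
lemma span_add_eq {F V : Type*} [Field F] [AddCommGroup V] [Module F V]
    (P Q : Multiset V) :
    Submodule.span F {x : V | x ∈ P + Q} =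
      Submodule.span F {x : V | x ∈ P} ⊔ Submodule.span F {x : V | x ∈ Q} := by
  rw [← Submodule.span_union]
  congr 1
  ext x
  simp [Multiset.mem_add]

lemma key {F V : Type*} [Field F] [AddCommGroup V] [Module F V] [DecidableEq V]
    (q : ℕ) (P₁ P₂ : Multiset V)
    (hP : IsQStable F q (P₁ + P₂))
    (hspan : Submodule.span F {x : V | x ∈ P₁} ⊓ Submodule.span F {x : V | x ∈ P₂} = ⊥) :
    IsQStable F q P₁ := by
  intro S hS hcard
  have hS' : S ≤ P₁ + P₂ := le_trans hS (le_add_right le_rfl)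
  have h := hP S hS' hcard
  have hsub : P₁ + P₂ - S = (P₁ - S) + P₂ := (tsub_add_eq_add_tsub hS).symm
  rw [hsub, span_add_eq, span_add_eq] at h
  set A' := Submodule.span F {x : V | x ∈ P₁ - S}
  set A := Submodule.span F {x : V | x ∈ P₁}
  set B := Submodule.span F {x : V | x ∈ P₂}
  have hA'A : A' ≤ A := Submodule.span_mono (fun x hx => Multiset.mem_of_le (tsub_le_self) hx)
  calc A' = A' ⊔ (B ⊓ A) := by rw [inf_comm, hspan, sup_bot_eq]
    _ = (A' ⊔ B) ⊓ A := (sup_inf_assoc_of_le B hA'A).symm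
    _ = (A ⊔ B) ⊓ A := by rw [h]
    _ = A := inf_eq_right.mpr le_sup_left

theorem stmt_11 {F : Type*} [Field F] {V : Type*} [AddCommGroup V] [Module F V]
    [FiniteDimensional F V] [DecidableEq V]
    (q : ℕ) (hq : 0 < q) (P₁ P₂ : Multiset V)
    (hP : IsQStable F q (P₁ + P₂))
    (hspan : Submodule.span F {x : V | x ∈ P₁} ⊓ Submodule.span F {x : V | x ∈ P₂} = ⊥) :
    IsQStable F q P₁ ∧ IsQStable F q P₂ := by
  refine ⟨key q P₁ P₂ hP hspan, key q P₂ P₁ ?_ ?_⟩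
  · rwa [add_comm]
  · rwa [inf_comm]
end
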